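/- Consider finite or right-infinite words over the alphabet {A1, A2, A3} starting after a symbol C, where the factors A_iA_i (i = 1,2,3), CA1C, CA1A2, A2A1C, A2A1A2, CA2C, CA2A3, A3A2C, A3A2A3, CA3C, CA3A1, A1A3C, A1A3A1 are all forbidden, and the word must end with C if finite. Then the only finite such word is the empty word (symbol sequence CC), and the only right-infinite such words are CA1A3A2A1A3A2..., CA2A1A3A2A1A3A2A1..., and CA3A2A1A3A2A1... (eventually periodic with period A1A3A2 read in that cyclic order). -/
import Mathlib


/- We encode the alphabet `{C, A1, A2, A3}` as `Option (Fin 3)`, with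
`C = none` and `A_i = some i` (`A1 = some 0`, `A2 = some 1`, `A3 = some 2`).
The forbidden contiguous factors `A_iA_i`, `CA_iC`, `CA_iA_{i+1}`,
`A_{i+1}A_iC`, `A_{i+1}A_iA_{i+1}` (indices mod 3, so these are exactly
`CA1C, CA1A2, A2A1C, A2A1A2, CA2C, CA2A3, A3A2C, A3A2A3, CA3C, CA3A1,
A1A3C, A1A3A1`). -/

/-- A word over `{C, A1, A2, A3}` avoids all the forbidden factors. -/
def AvoidsForbidden (t : List (Option (Fin 3))) : Prop :=
  ∀ i : Fin 3,
    ¬ [some i, some i] <:+: t ∧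
    ¬ [none, some i, none] <:+: t ∧
    ¬ [none, some i, some (i + 1)] <:+: t ∧
    ¬ [some (i + 1), some i, none] <:+: t ∧
    ¬ [some (i + 1), some i, some (i + 1)] <:+: t

lemma fin3_cases : ∀ a b : Fin 3, b ≠ a → b ≠ a + 1 → b = a + 2 := by decide

lemma fin3_succ : ∀ a b : Fin 3, b = a + 2 → a = b + 1 := by decide

lemma avoids_tail {x : Option (Fin 3)} {t : List (Option (Fin 3))}
    (h : AvoidsForbidden (x :: t)) : AvoidsForbidden t := by
  intro i
  obtain ⟨h1, h2, h3, h4, h5⟩ := h i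
  exact ⟨fun h' => h1 (h'.trans (List.infix_cons (List.infix_refl t))),
    fun h' => h2 (h'.trans (List.infix_cons (List.infix_refl t))),
    fun h' => h3 (h'.trans (List.infix_cons (List.infix_refl t))),
    fun h' => h4 (h'.trans (List.infix_cons (List.infix_refl t))),
    fun h' => h5 (h'.trans (List.infix_cons (List.infix_refl t)))⟩

lemma aux : ∀ (l : List (Fin 3)) (a b : Fin 3), b = a + 2 →
    ¬ AvoidsForbidden (some a :: some b :: l.map some ++ [none]) := by
  intro l
  induction l with
  | nil =>
    intro a b hab h
    have ha : a = b + 1 := fin3_succ a b hab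
    exact (h b).2.2.2.1 (by rw [← ha]; exact ⟨[], [], rfl⟩)
  | cons c l ih =>
    intro a b hab h
    have ha : a = b + 1 := fin3_succ a b hab
    have hc1 : c ≠ b := by
      intro hcb
      exact (h b).1 ⟨[some a], l.map some ++ [none], by simp [hcb]⟩
    have hc2 : c ≠ b + 1 := by
      intro hcb
      exact (h b).2.2.2.2 ⟨[], l.map some ++ [none], by rw [ha, hcb]; rfl⟩
    have hc : c = b + 2 := fin3_cases b c hc1 hc2
    exact ih b c hc (avoids_tail h)

/-- Classification of singularity sequences beginning with `C` (in the case
`α1, α2, α3 > 0`): the only finite admissible sequence is `CC`, and the only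
right-infinite admissible sequences `C s₀ s₁ s₂ …` are
`CA1A3A2A1A3A2…`, `CA2A1A3A2A1A3…`, `CA3A2A1A3A2A1…`, i.e. those with
`s (n+1) = s n + 2` (mod 3) throughout. -/
theorem singularity_sequences_from_C :
    (∀ w : List (Fin 3),
        AvoidsForbidden ([none] ++ w.map some ++ [none]) → w = []) ∧
    (∀ s : ℕ → Fin 3,
        (∀ n : ℕ, s (n + 1) ≠ s n) →
        (∀ n : ℕ, ¬ (s n = s (n + 1) + 1 ∧ s (n + 2) = s n)) →
        (s 1 ≠ s 0 + 1) →
        ∀ n : ℕ, s (n + 1) = s n + 2) := by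
  constructor
  · intro w h
    match w with
    | [] => rfl
    | [a] => exact absurd (List.infix_refl _) ((h a).2.1).elim
    | a :: b :: l =>
      exfalso
      have hb1 : b ≠ a := by
        intro hba
        exact (h a).1 ⟨[none], l.map some ++ [none], by simp [hba]⟩
      have hb2 : b ≠ a + 1 := by
        intro hba
        exact (h a).2.2.1 ⟨[], l.map some ++ [none], by rw [← hba]; rfl⟩
      exact aux l a b (fin3_cases a b hb1 hb2) (avoids_tail h)
  · intro s h1 h2 h3 n
    induction n with
    | zero => exact fin3_cases (s 0) (s 1) (h1 0) h3
    | succ n ih =>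
      refine fin3_cases _ _ (h1 (n + 1)) fun hc => h2 n ⟨?_, ?_⟩
      · exact fin3_succ (s n) (s (n + 1)) ih
      · rw [hc, ih]; exact (by decide : ∀ a : Fin 3, a + 2 + 1 = a) (s n)
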